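/- arXiv:1901.02995 — 2 statements merged into one kernel-verified Lean document; each statement's English description precedes it below -/
import Mathlib

section
/- Fix z ∈ ℝ and real parameters c_0, c_1, h_0, h_1, λ_0, λ_1 with λ_0, λ_1 > 0. Set 2c = c_0 + c_1, 2a = c_0 − c_1, 2λ = λ_0 + λ_1, 2κ = λ_0 − λ_1, H = h_0 + h_1, and D = (az − κ)² + λ_0 λ_1 e^{zH} (assume D > 0). Define φ_i(t) = e^{t(cz−λ)}[cosh(t√D) + (−1)^i (az − κ + (−1)^i λ_i e^{z h_i}) sinh(t√D)/√D] for i = 0,1. Then φ_0, φ_1 solve the coupled ODE system φ_i'(t) = (c_i z − λ_i) φ_i(t) + λ_i e^{z h_i} φ_{1−i}(t) with φ_i(0) = 1. -/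
open Real

/-!
Both functions are of the form `f_b(t) = e^{pt} (cosh (st) + b sinh (st) / s)`, and
`f_b' = α f_b + β f_{b'}` as soon as the coefficients of `e^{pt} cosh (st)` and `e^{pt} sinh (st)`
agree: `α + β = p + b` and `α b + β b' = p b + s²`. Take `p = cz − λ`, `s = √D`,
`b_i = (−1)^i (az − κ) + λ_i e^{z h_i}`, `α = c_i z − λ_i` and `β = λ_i e^{z h_i}`. Since
`c_i = c ± a` and `λ_i = λ ± κ`, the first condition is immediate, and the second reduces to
`(az − κ)² + λ_0 e^{z h_0} λ_1 e^{z h_1} = D`.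
-/

noncomputable def expCoshSinh (p s b t : ℝ) : ℝ :=
  exp (t * p) * (cosh (t * s) + b * sinh (t * s) / s)

@[simp]
lemma expCoshSinh_zero (p s b : ℝ) : expCoshSinh p s b 0 = 1 := by
  simp [expCoshSinh]

lemma hasDerivAt_expCoshSinh (p s b t : ℝ) (hs : s ≠ 0) :
    HasDerivAt (expCoshSinh p s b)
      (p * expCoshSinh p s b t + exp (t * p) * (s * sinh (t * s) + b * cosh (t * s))) t := by
  have hexp : HasDerivAt (fun t => exp (t * p)) (exp (t * p) * p) t :=
    ((hasDerivAt_id t).mul_const p).exp.congr_deriv (by simp)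
  have hlin : HasDerivAt (fun t : ℝ => t * s) s t := by
    simpa using (hasDerivAt_id t).mul_const s
  have hbracket : HasDerivAt (fun t => cosh (t * s) + b * sinh (t * s) / s)
      (sinh (t * s) * s + b * (cosh (t * s) * s) / s) t :=
    hlin.cosh.add ((hlin.sinh.const_mul b).div_const s)
  refine (hexp.mul hbracket).congr_deriv ?_
  simp only [expCoshSinh]
  field_simp

lemma hasDerivAt_expCoshSinh_of_coeff {p s b b' α β : ℝ} (hs : s ≠ 0)
    (hcosh : α + β = p + b) (hsinh : α * b + β * b' = p * b + s ^ 2) (t : ℝ) :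
    HasDerivAt (expCoshSinh p s b) (α * expCoshSinh p s b t + β * expCoshSinh p s b' t) t := by
  convert hasDerivAt_expCoshSinh p s b t hs using 1
  simp only [expCoshSinh]
  field_simp
  linear_combination (s * cosh (t * s)) * hcosh + sinh (t * s) * hsinh

theorem stmt1_general (z : ℝ) (c h lam : Fin 2 → ℝ)
    (cc a L k H D : ℝ)
    (hcc : 2 * cc = c 0 + c 1) (ha : 2 * a = c 0 - c 1)
    (hL : 2 * L = lam 0 + lam 1) (hk : 2 * k = lam 0 - lam 1)
    (hH : H = h 0 + h 1)
    (hD : D = (a * z - k) ^ 2 + lam 0 * lam 1 * Real.exp (z * H)) (hDpos : 0 < D)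
    (φ : Fin 2 → ℝ → ℝ)
    (hφ : ∀ i t, φ i t =
      Real.exp (t * (cc * z - L)) *
        (Real.cosh (t * Real.sqrt D) +
          (-1 : ℝ) ^ (i : ℕ) * (a * z - k + (-1 : ℝ) ^ (i : ℕ) * lam i * Real.exp (z * h i)) *
            Real.sinh (t * Real.sqrt D) / Real.sqrt D)) :
    (∀ i, φ i 0 = 1) ∧
    (∀ i t, HasDerivAt (φ i)
      ((c i * z - lam i) * φ i t + lam i * Real.exp (z * h i) * φ (1 - i) t) t) := by
  have hφ_eq : ∀ i, φ i = expCoshSinh (cc * z - L) (√D)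
      ((-1 : ℝ) ^ (i : ℕ) * (a * z - k + (-1 : ℝ) ^ (i : ℕ) * lam i * exp (z * h i))) :=
    fun i => funext (hφ i)
  refine ⟨fun i => by rw [hφ_eq, expCoshSinh_zero], fun i t => ?_⟩
  have hs : √D ≠ 0 := (sqrt_pos.mpr hDpos).ne'
  have hsq : √D ^ 2 = D := sq_sqrt hDpos.le
  have hc : c = ![cc + a, cc - a] := by ext i; fin_cases i <;> simp <;> linarith
  have hlam : lam = ![L + k, L - k] := by ext i; fin_cases i <;> simp <;> linarith
  subst hc hlam
  simp only [Matrix.cons_val_zero, Matrix.cons_val_one] at hD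
  have hjumps : (L + k) * exp (z * h 0) * ((L - k) * exp (z * h 1)) =
      (L + k) * (L - k) * exp (z * H) := by
    rw [hH, mul_add, exp_add]; ring
  fin_cases i <;> rw [hφ_eq, hφ_eq] <;>
    simp only [Fin.zero_eta, Fin.mk_one, Fin.val_zero, Fin.val_one, sub_zero, sub_self, pow_zero,
      pow_one, Matrix.cons_val_zero, Matrix.cons_val_one] <;>
    exact hasDerivAt_expCoshSinh_of_coeff hs (by ring) (by linear_combination hjumps - hsq - hD) t

/-- The closed-form jump-telegraph moment generating functions
`φ_i(t) = e^{t(cz−λ)}[cosh(t√D) + (−1)^i (az − κ + (−1)^i λ_i e^{z h_i}) sinh(t√D)/√D]`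
solve the coupled ODE system `φ_i' = (c_i z − λ_i) φ_i + λ_i e^{z h_i} φ_{1−i}`,
`φ_i(0) = 1`, where `2c = c_0 + c_1`, `2a = c_0 − c_1`, `2λ = λ_0 + λ_1`,
`2κ = λ_0 − λ_1`, `H = h_0 + h_1` and `D = (az − κ)² + λ_0 λ_1 e^{zH} > 0`. -/
theorem stmt1 (z : ℝ) (c h lam : Fin 2 → ℝ) (hlam : ∀ i, 0 < lam i)
    (cc a L k H D : ℝ)
    (hcc : 2 * cc = c 0 + c 1) (ha : 2 * a = c 0 - c 1)
    (hL : 2 * L = lam 0 + lam 1) (hk : 2 * k = lam 0 - lam 1)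
    (hH : H = h 0 + h 1)
    (hD : D = (a * z - k) ^ 2 + lam 0 * lam 1 * Real.exp (z * H)) (hDpos : 0 < D)
    (φ : Fin 2 → ℝ → ℝ)
    (hφ : ∀ i t, φ i t =
      Real.exp (t * (cc * z - L)) *
        (Real.cosh (t * Real.sqrt D) +
          (-1 : ℝ) ^ (i : ℕ) * (a * z - k + (-1 : ℝ) ^ (i : ℕ) * lam i * Real.exp (z * h i)) *
            Real.sinh (t * Real.sqrt D) / Real.sqrt D)) :
    (∀ i, φ i 0 = 1) ∧
    (∀ i t, HasDerivAt (φ i)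
      ((c i * z - lam i) * φ i t + lam i * Real.exp (z * h i) * φ (1 - i) t) t) :=
  stmt1_general z c h lam cc a L k H D hcc ha hL hk hH hD hDpos φ hφ
end

section
/- Let λ^Q > 0, d_0, d_1 ∈ ℝ, and m_i(s) as in the jump-telegraph mean formula. Then for 0 ≤ t ≤ T: ∫_t^T m_i(s − t) ds = (1/(2λ^Q))[(λ_1^Q d_0 + λ_0^Q d_1)(T−t)²/2 + (−1)^i λ_i^Q (d_0 − d_1) (2λ^Q(T−t) + e^{−2λ^Q(T−t)} − 1)/(4(λ^Q)²)]. Consequently, under the unbiased expectation hypothesis, the jump-telegraph Merton zero coupon bond price exp(−∫_t^T E^Q[r_s|F_t] ds) equals exp(r_t C(t,T) + D_i(t,T)) with C(t,T) = −(T−t) and D_i(t,T) = −∫_t^T m_i(s−t) ds, i.e. the bond price has affine structure in r_t. -/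
open Real intervalIntegral

/-! The mean `m_i` is a linear function plus a multiple of `1 - e^{-2λ^Q s}`, so it integrates in
closed form; translating `s ↦ s - t` reduces `∫_t^T` to `∫_0^{T-t}`. The affine structure of the
bond price is linearity of the integral in the constant `r_t`. -/

theorem integral_exp_neg_mul {c : ℝ} (hc : c ≠ 0) (τ : ℝ) :
    ∫ x in (0 : ℝ)..τ, exp (-c * x) = (1 - exp (-c * τ)) / c := by
  rw [integral_comp_mul_left (fun x => exp x) (neg_ne_zero.mpr hc), integral_exp, smul_eq_mul,
    mul_zero, exp_zero]
  field_simp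
  ring

theorem integral_one_sub_exp_neg_mul {c : ℝ} (hc : c ≠ 0) (τ : ℝ) :
    ∫ x in (0 : ℝ)..τ, (1 - exp (-c * x)) = (c * τ + exp (-c * τ) - 1) / c := by
  have hexp : Continuous fun x => exp (-c * x) := by fun_prop
  rw [integral_sub intervalIntegrable_const (hexp.intervalIntegrable _ _), integral_const,
    integral_exp_neg_mul hc]
  field_simp
  ring

theorem integral_telegraph_mean {L : ℝ} (hL : L ≠ 0) (A B τ : ℝ) :
    ∫ s in (0 : ℝ)..τ, (1 / (2 * L)) * (A * s + B * ((1 - exp (-2 * L * s)) / (2 * L))) =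
      (1 / (2 * L)) * (A * τ ^ 2 / 2 + B * ((2 * L * τ + exp (-2 * L * τ) - 1) / (4 * L ^ 2))) := by
  have h2L : 2 * L ≠ 0 := mul_ne_zero two_ne_zero hL
  have hexp : ∫ s in (0 : ℝ)..τ, (1 - exp (-2 * L * s)) =
      (2 * L * τ + exp (-2 * L * τ) - 1) / (2 * L) := by
    simpa only [neg_mul] using integral_one_sub_exp_neg_mul h2L τ
  have hcont : Continuous fun s => B * ((1 - exp (-2 * L * s)) / (2 * L)) := by fun_prop
  rw [integral_const_mul,
    integral_add (intervalIntegrable_id.const_mul A) (hcont.intervalIntegrable _ _),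
    integral_const_mul, integral_const_mul, integral_div, hexp, integral_id]
  field_simp
  ring

theorem exp_neg_integral_const_add {f : ℝ → ℝ} {t T : ℝ}
    (hf : IntervalIntegrable f MeasureTheory.volume t T) (r : ℝ) :
    exp (-∫ s in t..T, (r + f s)) = exp (r * (-(T - t)) + (-∫ s in t..T, f s)) := by
  rw [integral_add intervalIntegrable_const hf, integral_const, smul_eq_mul]
  ring_nf

theorem stmt12_general (lamQ d : Fin 2 → ℝ) (hlam : ∀ i, 0 < lamQ i)
    (L : ℝ) (hL : 2 * L = lamQ 0 + lamQ 1)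
    (m : Fin 2 → ℝ → ℝ)
    (hm : ∀ i s, m i s =
      (1 / (2 * L)) * ((lamQ 1 * d 0 + lamQ 0 * d 1) * s +
        (-1 : ℝ) ^ (i : ℕ) * lamQ i * (d 0 - d 1) * ((1 - Real.exp (-2 * L * s)) / (2 * L))))
    (t T : ℝ) :
    (∀ i : Fin 2,
      ∫ s in t..T, m i (s - t) =
        (1 / (2 * L)) * ((lamQ 1 * d 0 + lamQ 0 * d 1) * (T - t) ^ 2 / 2 +
          (-1 : ℝ) ^ (i : ℕ) * lamQ i * (d 0 - d 1) *
            ((2 * L * (T - t) + Real.exp (-2 * L * (T - t)) - 1) / (4 * L ^ 2)))) ∧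
    ∀ (rt : ℝ) (i : Fin 2),
      Real.exp (-∫ s in t..T, (rt + m i (s - t))) =
        Real.exp (rt * (-(T - t)) + (-∫ s in t..T, m i (s - t))) := by
  have hL0 : L ≠ 0 := by linarith [hlam 0, hlam 1]
  have hm_cont : ∀ i, Continuous (m i) := fun i => by
    rw [funext (hm i)]
    fun_prop
  refine ⟨fun i => ?_, fun rt i => exp_neg_integral_const_add ?_ rt⟩
  · rw [integral_comp_sub_right (m i), sub_self]
    simp only [hm]
    exact integral_telegraph_mean hL0 _ _ _
  · exact ((hm_cont i).comp (continuous_sub_right t)).intervalIntegrable t T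

/-- Integrating the jump-telegraph mean
`m_i(s) = (1/(2λ^Q))[(λ_1^Q d_0 + λ_0^Q d_1)s + (−1)^i λ_i^Q (d_0 − d_1)(1 − e^{−2λ^Q s})/(2λ^Q)]`
gives `∫_t^T m_i(s−t) ds = (1/(2λ^Q))[(λ_1^Q d_0 + λ_0^Q d_1)(T−t)²/2 +
(−1)^i λ_i^Q (d_0 − d_1)(2λ^Q(T−t) + e^{−2λ^Q(T−t)} − 1)/(4(λ^Q)²)]`; consequently, under
the unbiased expectation hypothesis the Merton jump-telegraph zero coupon bond price
`exp(−∫_t^T E^Q[r_s|F_t] ds) = exp(−∫_t^T (r_t + m_i(s−t)) ds)` equals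
`exp(r_t C(t,T) + D_i(t,T))` with `C(t,T) = −(T−t)`, `D_i(t,T) = −∫_t^T m_i(s−t) ds`:
an affine structure in `r_t`. -/
theorem stmt12 (lamQ d : Fin 2 → ℝ) (hlam : ∀ i, 0 < lamQ i)
    (L : ℝ) (hL : 2 * L = lamQ 0 + lamQ 1)
    (m : Fin 2 → ℝ → ℝ)
    (hm : ∀ i s, m i s =
      (1 / (2 * L)) * ((lamQ 1 * d 0 + lamQ 0 * d 1) * s +
        (-1 : ℝ) ^ (i : ℕ) * lamQ i * (d 0 - d 1) * ((1 - Real.exp (-2 * L * s)) / (2 * L))))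
    (t T : ℝ) (ht : 0 ≤ t) (htT : t ≤ T) :
    (∀ i : Fin 2,
      ∫ s in t..T, m i (s - t) =
        (1 / (2 * L)) * ((lamQ 1 * d 0 + lamQ 0 * d 1) * (T - t) ^ 2 / 2 +
          (-1 : ℝ) ^ (i : ℕ) * lamQ i * (d 0 - d 1) *
            ((2 * L * (T - t) + Real.exp (-2 * L * (T - t)) - 1) / (4 * L ^ 2)))) ∧
    ∀ (rt : ℝ) (i : Fin 2),
      Real.exp (-∫ s in t..T, (rt + m i (s - t))) =
        Real.exp (rt * (-(T - t)) + (-∫ s in t..T, m i (s - t))) :=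
  stmt12_general lamQ d hlam L hL m hm t T
end
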